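/- arXiv:1503.06506 — 4 statements merged into one kernel-verified Lean document; each statement's English description precedes it below -/
import Mathlib

section
/- Fix d > 0. The map η_d : 𝓕² → ℝ² sending (f_12, f_13) to the unique balanced pair (d_12, d_13) (with d_12 + d_13 = d and f̃_12(d_12) = f̃_13(d_13)) is continuous with respect to the Whitney C¹-topology on 𝓕². Consequently the map (f_12, f_13) ↦ (g_23(d), g′_23(d)) is continuous, where g_23 is the case-1 virtual interaction induced by f_12 and f_13. -/
/-!
`f̃₁₂` and `f̃₁₃` are strictly increasing on `ℝ₊` and tend to `-∞` at `0⁺`, so on `(0, d)` the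
function `t ↦ f̃₁₂ t - f̃₁₃ (d - t)` increases strictly from `-∞` to `+∞` and `d₁₂(d)` is its
unique zero. Whitney-close laws have uniformly close values and derivatives on `ℝ₊`, so strict
sign changes of this function on both sides of `d₁₂` survive a perturbation of `(f₁₂, f₁₃)` and
trap the zero: `η_d` is continuous. Since `f̃₁₃` is `C¹` with positive derivative, the inverse
function theorem gives `d₁₂′ = f̃₁₃′(d₁₃) / (f̃₁₂′(d₁₂) + f̃₁₃′(d₁₃))`, hence
`g̃₂₃′ = f̃₁₂′ f̃₁₃′ / (f̃₁₂′ + f̃₁₃′)`, whose ingredients depend continuously on `(f₁₂, f₁₃)`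
by the same uniform convergence.
-/

open Set Filter Topology MeasureTheory Matrix Function

attribute [local instance] Classical.propDecidable

noncomputable section

/-- `f̃(d) = d * f(d)`. -/
def tildeFn (f : ℝ → ℝ) : ℝ → ℝ := fun d => d * f d

/-- Membership in the class `𝓕` of monotone interaction laws:
`f` is `C¹` on `ℝ₊ = (0,∞)`, `f̃′ > 0` on `ℝ₊`, `f̃` has a zero, and
`∫_d^1 f̃(x) dx → −∞` as `d → 0⁺`. -/
def MemF (f : ℝ → ℝ) : Prop :=
  ContDiffOn ℝ 1 f (Set.Ioi 0) ∧
  (∀ d > (0:ℝ), 0 < deriv (tildeFn f) d) ∧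
  (∃ d > (0:ℝ), tildeFn f d = 0) ∧
  Tendsto (fun d => ∫ x in d..(1:ℝ), tildeFn f x) (𝓝[>] (0:ℝ)) atBot

/-- The space `C¹(ℝ₊, ℝ)`. -/
def C1Pos : Type := {f : ℝ → ℝ // ContDiffOn ℝ 1 f (Set.Ioi 0)}

/-- The Whitney `C¹`-topology on `C¹(ℝ₊, ℝ)`, generated by the basic open sets
`B_δ(f) = {g : |g(d) − f(d)| + |g′(d) − f′(d)| < δ(d) for all d > 0}`. -/
instance : TopologicalSpace C1Pos :=
  TopologicalSpace.generateFrom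
    { S | ∃ (f : C1Pos) (δ : ℝ → ℝ), ContinuousOn δ (Set.Ioi 0) ∧ (∀ d > (0:ℝ), 0 < δ d) ∧
        S = { g : C1Pos | ∀ d > (0:ℝ), |g.1 d - f.1 d| + |deriv g.1 d - deriv f.1 d| < δ d } }

/-- The class `𝓕` as a topological space (subspace of `C¹(ℝ₊,ℝ)`). -/
def FF : Type := {f : C1Pos // MemF f.1}

instance : TopologicalSpace FF := instTopologicalSpaceSubtype

/-- `G` is a triangulated Laman graph: there is a Henneberg-type construction order
(a relabeling `σ`) starting from the edge between the first two vertices, in which every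
later vertex is joined to exactly two earlier, adjacent, vertices. -/
def IsTLG {N : ℕ} (G : SimpleGraph (Fin N)) : Prop :=
  2 ≤ N ∧
  ∃ (σ : Equiv.Perm (Fin N)) (par₁ par₂ : Fin N → Fin N),
    (∀ k : Fin N, 2 ≤ (k : ℕ) →
      ((par₁ k : ℕ) < (k : ℕ) ∧ (par₂ k : ℕ) < (k : ℕ) ∧ par₁ k ≠ par₂ k ∧
        G.Adj (σ (par₁ k)) (σ (par₂ k)))) ∧
    (∀ i j : Fin N, G.Adj (σ i) (σ j) ↔
      (((i : ℕ) = 0 ∧ (j : ℕ) = 1) ∨ ((i : ℕ) = 1 ∧ (j : ℕ) = 0) ∨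
       (2 ≤ (i : ℕ) ∧ (j = par₁ i ∨ j = par₂ i)) ∨
       (2 ≤ (j : ℕ) ∧ (i = par₁ j ∨ i = par₂ j))))

/-- Euclidean distance on `ℝ²` (coordinates `(a,b)`). -/
def dist2 (x y : ℝ × ℝ) : ℝ := Real.sqrt ((x.1 - y.1)^2 + (x.2 - y.2)^2)

/-- `p` belongs to the configuration space `P`: no collision of adjacent agents. -/
def InConfigSpace {N : ℕ} (G : SimpleGraph (Fin N)) (p : Fin N → ℝ × ℝ) : Prop :=
  ∀ i j, G.Adj i j → p i ≠ p j

/-- `p` is an equilibrium of the RMA system `ẋᵢ = Σ_{j : (i,j) ∈ E} f_ij(d_ij)(x_j − x_i)`. -/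
def IsEquilibrium {N : ℕ} (G : SimpleGraph (Fin N)) (f : Fin N → Fin N → ℝ → ℝ)
    (p : Fin N → ℝ × ℝ) : Prop :=
  ∀ i, (∑ j, if G.Adj i j then (f i j (dist2 (p i) (p j))) • (p j - p i) else (0:ℝ×ℝ)) = 0

/-- The potential function `Φ(p) = Σ_{(i,j) ∈ E} ∫_1^{d_ij} x f_ij(x) dx`
(each edge counted once; the factor 1/2 compensates the double count over ordered pairs). -/
def potential {N : ℕ} (G : SimpleGraph (Fin N)) (f : Fin N → Fin N → ℝ → ℝ)
    (p : Fin N → ℝ × ℝ) : ℝ :=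
  (1/2) * ∑ i, ∑ j, if G.Adj i j then ∫ x in (1:ℝ)..(dist2 (p i) (p j)), x * f i j x else 0

/-- Coordinate directions on the configuration space, in the order `(a₁,…,a_N,b₁,…,b_N)`. -/
def basisVec {N : ℕ} : (Fin N ⊕ Fin N) → (Fin N → ℝ × ℝ) :=
  Sum.elim (fun i => Pi.single i ((1:ℝ), (0:ℝ))) (fun i => Pi.single i ((0:ℝ), (1:ℝ)))

/-- The Hessian matrix of `Φ` at `p` in the coordinates `(a₁,…,a_N,b₁,…,b_N)`. -/
def hessian {N : ℕ} (Φ : (Fin N → ℝ × ℝ) → ℝ) (p : Fin N → ℝ × ℝ) :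
    Matrix (Fin N ⊕ Fin N) (Fin N ⊕ Fin N) ℝ :=
  Matrix.of fun u v => fderiv ℝ (fun q => fderiv ℝ Φ q (basisVec v)) p (basisVec u)

/-- The inertia `𝐧(M) = (n₊(M), n₀(M), n₋(M))` of a real symmetric matrix: the numbers of
positive, zero, and negative eigenvalues (counted with multiplicity). -/
def inertia {m : Type*} [Fintype m] [DecidableEq m] (M : Matrix m m ℝ) : ℕ × ℕ × ℕ :=
  if h : M.IsHermitian then
    ((Finset.univ.filter fun i => 0 < h.eigenvalues i).card,
     (Finset.univ.filter fun i => h.eigenvalues i = 0).card,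
     (Finset.univ.filter fun i => h.eigenvalues i < 0).card)
  else (0, 0, 0)

/-- The number `n₀(M)` of zero eigenvalues of a real symmetric matrix. -/
def n0 {m : Type*} [Fintype m] [DecidableEq m] (M : Matrix m m ℝ) : ℕ := (inertia M).2.1

/-- The vector-valued sign function. -/
def sgn3 (x : ℝ) : ℕ × ℕ × ℕ :=
  if 0 < x then (1,0,0) else if x = 0 then (0,1,0) else (0,0,1)

/-- `q` lies in the `SE(2)`-orbit of `p` (rigid motions: rotation by `(c,s)` with
`c² + s² = 1` followed by translation by `(vx,vy)`). -/
def sameOrbit {N : ℕ} (p q : Fin N → ℝ × ℝ) : Prop :=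
  ∃ c s vx vy : ℝ, c^2 + s^2 = 1 ∧
    ∀ i, q i = (c * (p i).1 - s * (p i).2 + vx, s * (p i).1 + c * (p i).2 + vy)

/-- The interaction laws determined by an ensemble `ω ∈ 𝓕^{|E|}`. -/
def ensembleLaws {N : ℕ} {G : SimpleGraph (Fin N)} (ω : G.edgeSet → FF) :
    Fin N → Fin N → ℝ → ℝ :=
  fun i j => if h : G.Adj i j then (ω ⟨s(i,j), G.mem_edgeSet.mpr h⟩).1.1 else 0

/-- The line configuration on the `a`-axis with coordinates `a`. -/
def lineConfig {N : ℕ} (a : Fin N → ℝ) : Fin N → ℝ × ℝ := fun i => (a i, 0)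

/-- The matrix `F_p` of a line configuration with coordinates `a`: symmetric, zero row sums,
off-diagonal entries `φ_ij(d_ij)` on edges and `0` otherwise. -/
def FMat {N : ℕ} (G : SimpleGraph (Fin N)) (φ : Fin N → Fin N → ℝ → ℝ)
    (a : Fin N → ℝ) : Matrix (Fin N) (Fin N) ℝ :=
  Matrix.of fun i j =>
    if i = j then -∑ k, (if G.Adj i k then φ i k |a i - a k| else 0)
    else if G.Adj i j then φ i j |a i - a j| else 0

/-- The matrix `d̃F_p`: off-diagonal entries `f̃′_ij(d_ij)` on edges. -/
def dFMat {N : ℕ} (G : SimpleGraph (Fin N)) (f : Fin N → Fin N → ℝ → ℝ)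
    (a : Fin N → ℝ) : Matrix (Fin N) (Fin N) ℝ :=
  FMat G (fun i j d => deriv (tildeFn (f i j)) d) a

/-- Case 1 balanced distance: the (generically unique) `d₁₂(d)` with `0 < d₁₂ < d` and
`f̃₁₂(d₁₂) = f̃₁₃(d − d₁₂)`. -/
def case1d12 (f12 f13 : ℝ → ℝ) (d : ℝ) : ℝ :=
  Classical.epsilon fun t => 0 < t ∧ t < d ∧ tildeFn f12 t = tildeFn f13 (d - t)

/-- The case-1 virtual interaction: `g̃₂₃(d) = f̃₁₂(d₁₂(d))`. -/
def g23Case1 (f12 f13 : ℝ → ℝ) : ℝ → ℝ :=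
  fun d => tildeFn f12 (case1d12 f12 f13 d) / d

/-- Case 2 balanced distance: the (generically unique) `d₁₂(d) > 0` with
`f̃₁₂(d₁₂) + f̃₁₃(d₁₂ + d) = 0`. -/
def case2d12 (f12 f13 : ℝ → ℝ) (d : ℝ) : ℝ :=
  Classical.epsilon fun t => 0 < t ∧ tildeFn f12 t + tildeFn f13 (t + d) = 0

/-- The case-2 virtual interaction: `g̃₂₃(d) = f̃₁₃(d₁₃(d))`, `d₁₃(d) = d₁₂(d) + d`. -/
def g23Case2 (f12 f13 : ℝ → ℝ) : ℝ → ℝ :=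
  fun d => tildeFn f13 (case2d12 f12 f13 d + d) / d

/-- The case-3 virtual interaction: case 2 with the roles of agents 2,3 (and `f₁₂`,`f₁₃`)
interchanged. -/
def g23Case3 (f12 f13 : ℝ → ℝ) : ℝ → ℝ := g23Case2 f13 f12

/-- The virtual interaction between agents 2 and 3 induced by `f₁₂`, `f₁₃`, chosen according
to which of the three aligned agents (at coordinates `a1`, `a2`, `a3`) lies between the
other two. -/
def virtualG (f12 f13 : ℝ → ℝ) (a1 a2 a3 : ℝ) : ℝ → ℝ :=
  if (a2 < a1 ∧ a1 < a3) ∨ (a3 < a1 ∧ a1 < a2) then g23Case1 f12 f13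
  else if (a1 < a2 ∧ a2 < a3) ∨ (a3 < a2 ∧ a2 < a1) then g23Case2 f12 f13
  else g23Case3 f12 f13

/-- The interaction laws of the reduced system: vertex `0` (the last Henneberg vertex,
the paper's vertex 1) is deleted, reduced vertex `i` is original vertex `i+1`, and the law on
the reduced edge `(0,1)` (the paper's edge `(2,3)`) is `f*₂₃ = f₂₃ + g₂₃`. -/
def reducedLaws {n : ℕ} (f : Fin (n+3) → Fin (n+3) → ℝ → ℝ) (g : ℝ → ℝ) :
    Fin (n+2) → Fin (n+2) → ℝ → ℝ :=
  fun i j => if (i = 0 ∧ j = 1) ∨ (i = 1 ∧ j = 0)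
    then fun d => f i.succ j.succ d + g d
    else f i.succ j.succ

end

section TildeFn

variable {f : ℝ → ℝ} {t : ℝ}

lemma contDiffAt_tildeFn (hf : ContDiffOn ℝ 1 f (Ioi 0)) (ht : 0 < t) :
    ContDiffAt ℝ 1 (tildeFn f) t :=
  contDiffAt_id.mul (hf.contDiffAt (Ioi_mem_nhds ht))

lemma hasStrictDerivAt_tildeFn (hf : ContDiffOn ℝ 1 f (Ioi 0)) (ht : 0 < t) :
    HasStrictDerivAt (tildeFn f) (deriv (tildeFn f) t) t :=
  (contDiffAt_tildeFn hf ht).hasStrictDerivAt one_ne_zero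

lemma continuousAt_tildeFn (hf : ContDiffOn ℝ 1 f (Ioi 0)) (ht : 0 < t) :
    ContinuousAt (tildeFn f) t :=
  (contDiffAt_tildeFn hf ht).continuousAt

lemma deriv_tildeFn (hf : ContDiffOn ℝ 1 f (Ioi 0)) (ht : 0 < t) :
    deriv (tildeFn f) t = f t + t * deriv f t := by
  have hft := (hf.differentiableOn one_ne_zero).differentiableAt (Ioi_mem_nhds ht)
  have h := (hasDerivAt_id t).mul hft.hasDerivAt
  rw [one_mul] at h
  exact h.deriv

lemma MemF.strictMonoOn_tildeFn (hf : MemF f) : StrictMonoOn (tildeFn f) (Ioi 0) :=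
  strictMonoOn_of_deriv_pos (convex_Ioi 0)
    (fun _ ht => (continuousAt_tildeFn hf.1 ht).continuousWithinAt)
    (fun t ht => hf.2.1 t (by simpa using ht))

lemma MemF.tendsto_tildeFn_nhdsGT_zero (hf : MemF f) :
    Tendsto (tildeFn f) (𝓝[>] 0) atBot := by
  have hmono := hf.strictMonoOn_tildeFn
  -- a lower bound `M` on `(0, 1)` would keep `∫_s^1 f̃` above `min M 0`
  have hunbdd : ∀ M, ∃ s ∈ Ioo (0:ℝ) 1, tildeFn f s < M := by
    intro M
    by_contra! hM
    have hint : ∀ s ∈ Ioo (0:ℝ) 1, M * (1 - s) ≤ ∫ x in s..1, tildeFn f x := by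
      intro s hs
      have hpos : ∀ x ∈ Icc s 1, 0 < x := fun x hx => hs.1.trans_le hx.1
      have hcont : ContinuousOn (tildeFn f) (uIcc s 1) := by
        rw [uIcc_of_le hs.2.le]
        exact fun x hx => (continuousAt_tildeFn hf.1 (hpos x hx)).continuousWithinAt
      calc M * (1 - s) = ∫ _ in s..1, M := by simp [mul_comm]
        _ ≤ ∫ x in s..1, tildeFn f x := by
          refine intervalIntegral.integral_mono_on hs.2.le intervalIntegrable_const
            hcont.intervalIntegrable fun x hx => ?_
          have hx0 := hpos x hx
          exact (hM (x / 2) ⟨by positivity, by linarith [hx.2]⟩).trans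
            (hmono.monotoneOn (by simp; positivity) hx0 (by linarith))
    obtain ⟨s, hs, hsI⟩ := ((tendsto_atBot.1 hf.2.2.2 (min M 0 - 1)).and
      (Ioo_mem_nhdsGT (by norm_num : (0:ℝ) < 1))).exists
    have hmin : min M 0 ≤ M * (1 - s) := by
      rcases le_total M 0 with h | h
      · rw [min_eq_left h]; nlinarith [hsI.1]
      · rw [min_eq_right h]; nlinarith [hsI.2]
    linarith [hint s hsI]
  refine tendsto_atBot.2 fun M => ?_
  obtain ⟨s, hs, hsM⟩ := hunbdd M
  filter_upwards [Ioo_mem_nhdsGT hs.1] with x hx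
  exact (hmono hx.1 hs.1 hx.2).le.trans hsM.le

end TildeFn

section Balance

variable {f₁₂ f₁₃ : ℝ → ℝ} {d : ℝ}

lemma tendsto_balance_nhdsGT_zero (h₁₂ : MemF f₁₂) (h₁₃ : MemF f₁₃) (hd : 0 < d) :
    Tendsto (fun t => tildeFn f₁₂ t - tildeFn f₁₃ (d - t)) (𝓝[>] 0) atBot := by
  refine tendsto_atBot_mono' _ ?_ (tendsto_atBot_add_const_right _ (-tildeFn f₁₃ (d / 2))
    h₁₂.tendsto_tildeFn_nhdsGT_zero)
  filter_upwards [Ioo_mem_nhdsGT (half_pos hd)] with t ht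
  have : tildeFn f₁₃ (d / 2) ≤ tildeFn f₁₃ (d - t) :=
    h₁₃.strictMonoOn_tildeFn.monotoneOn (half_pos hd) (show 0 < d - t by linarith [ht.2])
      (by linarith [ht.2])
  linarith

lemma exists_balance (h₁₂ : MemF f₁₂) (h₁₃ : MemF f₁₃) (hd : 0 < d) :
    ∃ t, 0 < t ∧ t < d ∧ tildeFn f₁₂ t = tildeFn f₁₃ (d - t) := by
  have hcont : ContinuousOn (fun t => tildeFn f₁₂ t - tildeFn f₁₃ (d - t)) (Ioo 0 d) :=
    fun t ht => ((continuousAt_tildeFn h₁₂.1 ht.1).sub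
      ((continuousAt_tildeFn h₁₃.1 (sub_pos.2 ht.2)).comp
        (continuousAt_const.sub continuousAt_id))).continuousWithinAt
  have hreflect : Tendsto (fun t => d - t) (𝓝[<] d) (𝓝[>] 0) := by
    refine tendsto_nhdsWithin_iff.2 ⟨?_, ?_⟩
    · exact ((continuous_sub_left d).tendsto' d 0 (sub_self d)).mono_left nhdsWithin_le_nhds
    · filter_upwards [self_mem_nhdsWithin] with t ht
      exact sub_pos.2 (mem_Iio.1 ht)
  have hright : Tendsto (fun t => tildeFn f₁₂ t - tildeFn f₁₃ (d - t)) (𝓝[<] d) atTop := by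
    refine (tendsto_neg_atBot_atTop.comp
      ((tendsto_balance_nhdsGT_zero h₁₃ h₁₂ hd).comp hreflect)).congr fun t => ?_
    simp
  obtain ⟨t, ht, h0⟩ := isPreconnected_Ioo.intermediate_value_Iii
    (le_principal_iff.2 (Ioo_mem_nhdsGT hd)) (le_principal_iff.2 (Ioo_mem_nhdsLT hd)) hcont
    (tendsto_balance_nhdsGT_zero h₁₂ h₁₃ hd) hright (mem_univ 0)
  exact ⟨t, ht.1, ht.2, sub_eq_zero.1 h0⟩

lemma case1d12_spec (h₁₂ : MemF f₁₂) (h₁₃ : MemF f₁₃) (hd : 0 < d) :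
    0 < case1d12 f₁₂ f₁₃ d ∧ case1d12 f₁₂ f₁₃ d < d ∧
      tildeFn f₁₂ (case1d12 f₁₂ f₁₃ d) = tildeFn f₁₃ (d - case1d12 f₁₂ f₁₃ d) :=
  Classical.epsilon_spec (exists_balance h₁₂ h₁₃ hd)

lemma case1d12_mem_Ioo (h₁₂ : MemF f₁₂) (h₁₃ : MemF f₁₃) (hd : 0 < d) {a b : ℝ}
    (ha : a ∈ Ioo 0 d) (hb : b ∈ Ioo 0 d) (hfa : tildeFn f₁₂ a < tildeFn f₁₃ (d - a))
    (hfb : tildeFn f₁₃ (d - b) < tildeFn f₁₂ b) :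
    case1d12 f₁₂ f₁₃ d ∈ Ioo a b := by
  obtain ⟨ht₀, htd, hbal⟩ := case1d12_spec h₁₂ h₁₃ hd
  have hm₁₂ := h₁₂.strictMonoOn_tildeFn.monotoneOn
  have hm₁₃ := h₁₃.strictMonoOn_tildeFn.monotoneOn
  have hsub : ∀ {s}, s ∈ Ioo 0 d → d - s ∈ Ioi 0 := fun hs => sub_pos.2 hs.2
  constructor
  · by_contra! h
    linarith [hm₁₂ ht₀ ha.1 h, hm₁₃ (hsub ha) (sub_pos.2 htd) (sub_le_sub_left h d)]
  · by_contra! h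
    linarith [hm₁₂ hb.1 ht₀ h, hm₁₃ (sub_pos.2 htd) (hsub hb) (sub_le_sub_left h d)]

end Balance

theorem continuousAt_case1d12_comp {X : Type*} [TopologicalSpace X] {F₁₂ F₁₃ : X → ℝ → ℝ}
    {D : X → ℝ} {x₀ : X} (hF₁₂ : ∀ x, MemF (F₁₂ x)) (hF₁₃ : ∀ x, MemF (F₁₃ x))
    (hD : ContinuousAt D x₀) (hD₀ : 0 < D x₀)
    (hc₁₂ : ∀ {u : X → ℝ}, ContinuousAt u x₀ → 0 < u x₀ →
      ContinuousAt (fun x => tildeFn (F₁₂ x) (u x)) x₀)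
    (hc₁₃ : ∀ {u : X → ℝ}, ContinuousAt u x₀ → 0 < u x₀ →
      ContinuousAt (fun x => tildeFn (F₁₃ x) (u x)) x₀) :
    ContinuousAt (fun x => case1d12 (F₁₂ x) (F₁₃ x) (D x)) x₀ := by
  obtain ⟨ht₀, htd, hbal⟩ := case1d12_spec (hF₁₂ x₀) (hF₁₃ x₀) hD₀
  set t₀ := case1d12 (F₁₂ x₀) (F₁₃ x₀) (D x₀)
  have hm₁₂ := (hF₁₂ x₀).strictMonoOn_tildeFn
  have hm₁₃ := (hF₁₃ x₀).strictMonoOn_tildeFn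
  -- strict sign changes of the balance at `x₀` persist nearby, and they trap the root
  have htrap : ∀ a ∈ Ioo 0 t₀, ∀ b ∈ Ioo t₀ (D x₀),
      ∀ᶠ x in 𝓝 x₀, case1d12 (F₁₂ x) (F₁₃ x) (D x) ∈ Ioo a b := by
    intro a ha b hb
    have hsa : tildeFn (F₁₂ x₀) a < tildeFn (F₁₃ x₀) (D x₀ - a) := by
      linarith [hm₁₂ ha.1 ht₀ ha.2,
        hm₁₃ (show 0 < D x₀ - t₀ by linarith) (show 0 < D x₀ - a by linarith [ha.2])
          (show D x₀ - t₀ < D x₀ - a by linarith [ha.2])]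
    have hsb : tildeFn (F₁₃ x₀) (D x₀ - b) < tildeFn (F₁₂ x₀) b := by
      linarith [hm₁₂ ht₀ (ht₀.trans hb.1) hb.1,
        hm₁₃ (show 0 < D x₀ - b by linarith [hb.2]) (show 0 < D x₀ - t₀ by linarith)
          (show D x₀ - b < D x₀ - t₀ by linarith [hb.1])]
    have ha' := hc₁₃ (hD.sub continuousAt_const) (show 0 < D x₀ - a by linarith [ha.2])
    have hb' := hc₁₃ (hD.sub continuousAt_const) (show 0 < D x₀ - b by linarith [hb.2])
    filter_upwards [(hc₁₂ (u := fun _ => a) continuousAt_const ha.1).eventually_lt ha' hsa,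
      hb'.eventually_lt (hc₁₂ (u := fun _ => b) continuousAt_const (ht₀.trans hb.1)) hsb,
      hD.eventually (lt_mem_nhds hb.2)] with x hxa hxb hxD
    have hx : 0 < D x := by linarith [ht₀.trans hb.1]
    exact case1d12_mem_Ioo (hF₁₂ x) (hF₁₃ x) hx ⟨ha.1, by linarith [ha.2, hb.1]⟩
      ⟨ht₀.trans hb.1, hxD⟩ hxa hxb
  have hmid : (t₀ + D x₀) / 2 ∈ Ioo t₀ (D x₀) := ⟨by linarith, by linarith⟩
  refine tendsto_order.2 ⟨fun a ha => ?_, fun b hb => ?_⟩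
  · filter_upwards [htrap (max a (t₀ / 2)) ⟨by positivity, max_lt ha (by linarith)⟩ _ hmid]
      with x hx
    exact (le_max_left _ _).trans_lt hx.1
  · filter_upwards [htrap (t₀ / 2) ⟨by positivity, by linarith⟩ (min b ((t₀ + D x₀) / 2))
      ⟨lt_min hb hmid.1, (min_le_right _ _).trans_lt hmid.2⟩] with x hx
    exact hx.2.trans_le (min_le_left _ _)

section Derivative

variable {f₁₂ f₁₃ : ℝ → ℝ} {d : ℝ}

lemma continuousAt_case1d12 (h₁₂ : MemF f₁₂) (h₁₃ : MemF f₁₃) (hd : 0 < d) :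
    ContinuousAt (case1d12 f₁₂ f₁₃) d :=
  continuousAt_case1d12_comp (fun _ => h₁₂) (fun _ => h₁₃) continuousAt_id hd
    (fun hu hu₀ => (continuousAt_tildeFn h₁₂.1 hu₀).comp hu)
    (fun hu hu₀ => (continuousAt_tildeFn h₁₃.1 hu₀).comp hu)

theorem hasDerivAt_case1d12 (h₁₂ : MemF f₁₂) (h₁₃ : MemF f₁₃) (hd : 0 < d) :
    HasDerivAt (case1d12 f₁₂ f₁₃)
      (deriv (tildeFn f₁₃) (d - case1d12 f₁₂ f₁₃ d) /
        (deriv (tildeFn f₁₂) (case1d12 f₁₂ f₁₃ d) +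
          deriv (tildeFn f₁₃) (d - case1d12 f₁₂ f₁₃ d))) d := by
  obtain ⟨ht₀, htd, hbal⟩ := case1d12_spec h₁₂ h₁₃ hd
  set t₀ := case1d12 f₁₂ f₁₃ d
  have hu₀ : 0 < d - t₀ := sub_pos.2 htd
  have hs₁₂ : 0 < deriv (tildeFn f₁₂) t₀ := h₁₂.2.1 t₀ ht₀
  have hs₁₃ : 0 < deriv (tildeFn f₁₃) (d - t₀) := h₁₃.2.1 _ hu₀
  have H₁₃ := hasStrictDerivAt_tildeFn h₁₃.1 hu₀
  -- `t ↦ t + f̃₁₃⁻¹ (f̃₁₂ t)` recovers `d` from its balanced distance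
  set g := H₁₃.localInverse (tildeFn f₁₃) _ _ hs₁₃.ne'
  have hg : HasDerivAt g (deriv (tildeFn f₁₃) (d - t₀))⁻¹ (tildeFn f₁₂ t₀) := by
    rw [hbal]; exact (H₁₃.to_localInverse hs₁₃.ne').hasDerivAt
  have hginv : ∀ᶠ u in 𝓝 (d - t₀), g (tildeFn f₁₃ u) = u :=
    H₁₃.eventually_left_inverse hs₁₃.ne'
  have hΦ : HasDerivAt (fun t => t + g (tildeFn f₁₂ t))
      (1 + (deriv (tildeFn f₁₃) (d - t₀))⁻¹ * deriv (tildeFn f₁₂) t₀) t₀ :=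
    (hasDerivAt_id t₀).add (hg.comp t₀ (hasStrictDerivAt_tildeFn h₁₂.1 ht₀).hasDerivAt)
  have hcont := continuousAt_case1d12 h₁₂ h₁₃ hd
  have hleft :
      ∀ᶠ d' in 𝓝 d, case1d12 f₁₂ f₁₃ d' + g (tildeFn f₁₂ (case1d12 f₁₂ f₁₃ d')) = d' := by
    filter_upwards [(continuousAt_id.sub hcont).eventually hginv, eventually_gt_nhds hd]
      with d' hinv hd'
    rw [(case1d12_spec h₁₂ h₁₃ hd').2.2]
    simp only [Pi.sub_apply, id_eq] at hinv
    rw [hinv]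
    ring
  refine (hΦ.of_local_left_inverse hcont (by positivity) hleft).congr_deriv ?_
  rw [inv_mul_eq_div, one_add_div hs₁₃.ne', inv_div, add_comm]

theorem hasDerivAt_g23Case1 (h₁₂ : MemF f₁₂) (h₁₃ : MemF f₁₃) (hd : 0 < d) :
    HasDerivAt (g23Case1 f₁₂ f₁₃)
      ((deriv (tildeFn f₁₂) (case1d12 f₁₂ f₁₃ d) *
            deriv (tildeFn f₁₃) (d - case1d12 f₁₂ f₁₃ d) /
          (deriv (tildeFn f₁₂) (case1d12 f₁₂ f₁₃ d) +
            deriv (tildeFn f₁₃) (d - case1d12 f₁₂ f₁₃ d)) * d -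
        tildeFn f₁₂ (case1d12 f₁₂ f₁₃ d)) / d ^ 2) d := by
  refine (((hasStrictDerivAt_tildeFn h₁₂.1 (case1d12_spec h₁₂ h₁₃ hd).1).hasDerivAt.comp d
    (hasDerivAt_case1d12 h₁₂ h₁₃ hd)).div (hasDerivAt_id' d) hd.ne').congr_deriv ?_
  simp only [Function.comp_apply, mul_one]
  ring

end Derivative

namespace C1Pos

lemma eventually_forall_abs_sub_lt (f : C1Pos) {c : ℝ} (hc : 0 < c) :
    ∀ᶠ g in 𝓝 f, ∀ t > 0, |g.1 t - f.1 t| + |deriv g.1 t - deriv f.1 t| < c := by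
  have hball : IsOpen {g : C1Pos | ∀ t > 0, |g.1 t - f.1 t| + |deriv g.1 t - deriv f.1 t| < c} :=
    TopologicalSpace.isOpen_generateFrom_of_mem
      ⟨f, fun _ => c, continuousOn_const, fun _ _ => hc, rfl⟩
  exact hball.mem_nhds fun _ _ => by simpa using hc

lemma continuousOn_deriv (f : C1Pos) : ContinuousOn (deriv f.1) (Ioi 0) :=
  (f.2.continuousOn_derivWithin isOpen_Ioi.uniqueDiffOn le_rfl).congr
    fun _ ht => (derivWithin_of_isOpen isOpen_Ioi ht).symm

variable {X : Type*} [TopologicalSpace X] {F : X → C1Pos} {u : X → ℝ} {x₀ : X}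

lemma tendstoUniformlyOn_apply (hF : ContinuousAt F x₀) :
    TendstoUniformlyOn (fun x => (F x).1) (F x₀).1 (𝓝 x₀) (Ioi 0) ∧
      TendstoUniformlyOn (fun x => deriv (F x).1) (deriv (F x₀).1) (𝓝 x₀) (Ioi 0) := by
  simp only [Metric.tendstoUniformlyOn_iff, Real.dist_eq]
  refine ⟨fun ε hε => ?_, fun ε hε => ?_⟩ <;>
  filter_upwards [hF.eventually (eventually_forall_abs_sub_lt (F x₀) hε)] with x hx t ht <;>
  rw [abs_sub_comm] <;>
  linarith [hx t ht, abs_nonneg ((F x).1 t - (F x₀).1 t),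
    abs_nonneg (deriv (F x).1 t - deriv (F x₀).1 t)]

lemma continuousAt_apply (hF : ContinuousAt F x₀) (hu : ContinuousAt u x₀) (hu₀ : 0 < u x₀) :
    ContinuousAt (fun x => (F x).1 (u x)) x₀ ∧
      ContinuousAt (fun x => deriv (F x).1 (u x)) x₀ := by
  have hu' : Tendsto u (𝓝 x₀) (𝓝[Ioi 0] (u x₀)) :=
    tendsto_nhdsWithin_iff.2 ⟨hu, hu.eventually (Ioi_mem_nhds hu₀)⟩
  exact ⟨(tendstoUniformlyOn_apply hF).1.tendsto_comp
      ((F x₀).2.continuousOn.continuousWithinAt hu₀) hu',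
    (tendstoUniformlyOn_apply hF).2.tendsto_comp
      ((continuousOn_deriv (F x₀)).continuousWithinAt hu₀) hu'⟩

lemma continuousAt_tildeFn_apply (hF : ContinuousAt F x₀) (hu : ContinuousAt u x₀)
    (hu₀ : 0 < u x₀) :
    ContinuousAt (fun x => tildeFn (F x).1 (u x)) x₀ ∧
      ContinuousAt (fun x => deriv (tildeFn (F x).1) (u x)) x₀ := by
  obtain ⟨hval, hder⟩ := continuousAt_apply hF hu hu₀
  refine ⟨hu.mul hval, (hval.add (hu.mul hder)).congr ?_⟩
  filter_upwards [hu.eventually (Ioi_mem_nhds hu₀)] with x hx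
  exact (deriv_tildeFn (F x).2 hx).symm

lemma continuous_tildeFn_apply (hF : Continuous F) (hu : Continuous u) (hu₀ : ∀ x, 0 < u x) :
    Continuous (fun x => tildeFn (F x).1 (u x)) ∧
      Continuous (fun x => deriv (tildeFn (F x).1) (u x)) := by
  simp only [continuous_iff_continuousAt]
  exact ⟨fun x => (continuousAt_tildeFn_apply hF.continuousAt hu.continuousAt (hu₀ x)).1,
    fun x => (continuousAt_tildeFn_apply hF.continuousAt hu.continuousAt (hu₀ x)).2⟩

end C1Pos

/-- for fixed `d > 0`, the map `η_d : 𝓕² → ℝ²` sending `(f₁₂, f₁₃)` to the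
unique balanced pair `(d₁₂, d₁₃)` (with `d₁₂ + d₁₃ = d`, `f̃₁₂(d₁₂) = f̃₁₃(d₁₃)`) is
continuous for the Whitney `C¹`-topology; consequently `(f₁₂, f₁₃) ↦ (g₂₃(d), g′₂₃(d))`
is continuous, `g₂₃` being the case-1 virtual interaction. -/
theorem statement15 (d : ℝ) (hd : 0 < d) :
    Continuous (fun x : FF × FF =>
      ((case1d12 x.1.1.1 x.2.1.1 d, d - case1d12 x.1.1.1 x.2.1.1 d) : ℝ × ℝ)) ∧
    Continuous (fun x : FF × FF =>
      ((g23Case1 x.1.1.1 x.2.1.1 d, deriv (g23Case1 x.1.1.1 x.2.1.1) d) : ℝ × ℝ)) := by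
  have hF₁₂ : Continuous fun x : FF × FF => x.1.1 := continuous_subtype_val.comp continuous_fst
  have hF₁₃ : Continuous fun x : FF × FF => x.2.1 := continuous_subtype_val.comp continuous_snd
  set D := fun x : FF × FF => case1d12 x.1.1.1 x.2.1.1 d
  have hD : Continuous D := continuous_iff_continuousAt.2 fun _ =>
    continuousAt_case1d12_comp (fun x => x.1.2) (fun x => x.2.2) continuousAt_const hd
      (fun hu hu₀ => (C1Pos.continuousAt_tildeFn_apply hF₁₂.continuousAt hu hu₀).1)
      (fun hu hu₀ => (C1Pos.continuousAt_tildeFn_apply hF₁₃.continuousAt hu hu₀).1)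
  refine ⟨hD.prodMk (continuous_const.sub hD), ?_⟩
  have hD₁₂ : ∀ x, 0 < D x := fun x => (case1d12_spec x.1.2 x.2.2 hd).1
  have hD₁₃ : ∀ x, 0 < d - D x := fun x => sub_pos.2 (case1d12_spec x.1.2 x.2.2 hd).2.1
  obtain ⟨hv, hS₁₂⟩ := C1Pos.continuous_tildeFn_apply hF₁₂ hD hD₁₂
  have hS₁₃ := (C1Pos.continuous_tildeFn_apply hF₁₃ (continuous_const.sub hD) hD₁₃).2
  have hsum : ∀ x : FF × FF,
      deriv (tildeFn x.1.1.1) (D x) + deriv (tildeFn x.2.1.1) (d - D x) ≠ 0 :=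
    fun x => (add_pos (x.1.2.2.1 _ (hD₁₂ x)) (x.2.2.2.1 _ (hD₁₃ x))).ne'
  refine (hv.div_const d).prodMk ?_
  exact (((((hS₁₂.mul hS₁₃).div (hS₁₂.add hS₁₃) hsum).mul continuous_const).sub hv).div_const
    (d ^ 2)).congr fun x => (hasDerivAt_g23Case1 x.1.2 x.2.2 hd).deriv.symm
end

section
/- Let M be a real symmetric N×N matrix (N ≥ 2). Suppose v*_1,…,v*_{N−1} is an orthonormal basis of ℝ^{N−1}, λ_1,…,λ_{N−1} are real numbers, and α_1,…,α_{N−1} are real numbers such that, setting v_i := (α_i, v*_i) ∈ ℝ^N, one has M·v_i = λ_i·(0, v*_i) for every i = 1,…,N−1. Then 𝐧(M) = sgn(M_{11}) + Σ_{i=1}^{N−1} sgn(λ_i); in particular n_+(M) = #{i : λ_i > 0} + [M_{11} > 0], n_0(M) = #{i : λ_i = 0} + [M_{11} = 0], and n_−(M) = #{i : λ_i < 0} + [M_{11} < 0]. -/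
open Set Filter Topology MeasureTheory Matrix Function

attribute [local instance] Classical.propDecidable

/-! With `vᵢ = (αᵢ, v*ᵢ)` and `e₀` the first unit vector, the hypotheses say exactly that
`e₀ᵀ M vⱼ = (M vⱼ)₀ = 0` and `vᵢᵀ M vⱼ = λⱼ ⟪v*ᵢ, v*ⱼ⟫ = λⱼ δᵢⱼ`, while `e₀ᵀ M e₀ = M₀₀`.
So for the invertible matrix `P` with columns `e₀, v₁, …, vₙ` we get
`Pᵀ M P = diag (M₀₀, λ₁, …, λₙ)`, and Sylvester's law of inertia compares this congruence
diagonalization with the orthogonal one given by the spectral theorem. -/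

open Finset QuadraticMap QuadraticForm

section SignCounts

variable {ι : Type*} [Fintype ι]

noncomputable def signCounts (w : ι → ℝ) : ℕ × ℕ × ℕ :=
  (#{i | 0 < w i}, #{i | w i = 0}, #{i | w i < 0})

theorem card_filter_pos_add_card_filter_eq_zero_add_card_filter_neg (w : ι → ℝ) :
    #{i | 0 < w i} + #{i | w i = 0} + #{i | w i < 0} = Fintype.card ι := by
  rw [card_filter, card_filter, card_filter, ← sum_add_distrib, ← sum_add_distrib,
    Fintype.card_eq_sum_ones]
  exact sum_congr rfl fun i _ => by split_ifs <;> grind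

theorem sgn3_eq_ite (x : ℝ) :
    sgn3 x = (if 0 < x then 1 else 0, if x = 0 then 1 else 0, if x < 0 then 1 else 0) := by
  unfold sgn3
  split_ifs <;> grind

theorem sum_sgn3 (w : ι → ℝ) : ∑ i, sgn3 (w i) = signCounts w := by
  simp only [signCounts, sgn3_eq_ite, Prod.ext_iff, Prod.fst_sum, Prod.snd_sum, card_filter,
    and_self]

theorem Matrix.transpose_mul_mul_apply {R : Type*} [CommRing R] (A P : Matrix ι ι R) (k l : ι) :
    (Pᵀ * A * P) k l = Pᵀ k ⬝ᵥ A *ᵥ Pᵀ l := by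
  simp only [mul_apply, transpose_apply, dotProduct, mulVec, sum_mul, mul_sum]
  rw [sum_comm]
  exact sum_congr rfl fun r _ => sum_congr rfl fun s _ => by ring

theorem Matrix.dotProduct_transpose_mul_mul_mulVec {R : Type*} [CommRing R] (A P : Matrix ι ι R)
    (x : ι → R) : x ⬝ᵥ (Pᵀ * A * P) *ᵥ x = (P *ᵥ x) ⬝ᵥ A *ᵥ (P *ᵥ x) := by
  rw [← mulVec_mulVec, ← mulVec_mulVec, dotProduct_mulVec, vecMul_transpose]

variable [DecidableEq ι]

theorem Matrix.equivalent_weightedSumSquares_of_transpose_mul_mul_eq_diagonal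
    {R : Type*} [CommRing R] {A P : Matrix ι ι R} {w : ι → R} (hP : IsUnit P)
    (h : Pᵀ * A * P = diagonal w) :
    Equivalent A.toQuadraticForm' (weightedSumSquares R w) := by
  have := hP.invertible
  refine ⟨QuadraticMap.IsometryEquiv.symm ⟨P.toLinearEquiv' this, fun x => ?_⟩⟩
  simp only [Matrix.toQuadraticForm', LinearMap.BilinMap.toQuadraticMap_apply,
    toLinearMap₂'_apply']
  change (P *ᵥ x) ⬝ᵥ A *ᵥ (P *ᵥ x) = _
  rw [← dotProduct_transpose_mul_mul_mulVec, h, weightedSumSquares_apply]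
  exact sum_congr rfl fun i _ => by rw [mulVec_diagonal, smul_eq_mul]; ring

theorem Matrix.signCounts_eq_of_transpose_mul_mul_eq_diagonal {A P Q : Matrix ι ι ℝ}
    {v w : ι → ℝ} (hP : IsUnit P) (hQ : IsUnit Q) (hv : Pᵀ * A * P = diagonal v)
    (hw : Qᵀ * A * Q = diagonal w) : signCounts v = signCounts w := by
  have ev := equivalent_weightedSumSquares_of_transpose_mul_mul_eq_diagonal hP hv
  have ew := equivalent_weightedSumSquares_of_transpose_mul_mul_eq_diagonal hQ hw
  have hpos : #{i | 0 < v i} = #{i | 0 < w i} := by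
    simpa [Set.ncard_eq_toFinset_card'] using
      (sigPos_of_equiv_weightedSumSquares ev).symm.trans (sigPos_of_equiv_weightedSumSquares ew)
  have hneg : #{i | v i < 0} = #{i | w i < 0} := by
    simpa [Set.ncard_eq_toFinset_card'] using
      (sigNeg_of_equiv_weightedSumSquares ev).symm.trans (sigNeg_of_equiv_weightedSumSquares ew)
  have htotv := card_filter_pos_add_card_filter_eq_zero_add_card_filter_neg v
  have htotw := card_filter_pos_add_card_filter_eq_zero_add_card_filter_neg w
  simp only [signCounts, Prod.ext_iff]
  omega

theorem inertia_eq_signCounts_of_transpose_mul_mul_eq_diagonal {A P : Matrix ι ι ℝ}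
    (hA : A.IsSymm) (hP : IsUnit P) {w : ι → ℝ} (h : Pᵀ * A * P = diagonal w) :
    inertia A = signCounts w := by
  have hH : A.IsHermitian := isHermitian_iff_isSymm.mpr hA
  have hU : (hH.eigenvectorUnitary : Matrix ι ι ℝ)ᵀ * A * hH.eigenvectorUnitary
      = diagonal hH.eigenvalues := by
    simpa [star_eq_conjTranspose] using hH.conjStarAlgAut_star_eigenvectorUnitary
  rw [inertia, dif_pos hH]
  exact signCounts_eq_of_transpose_mul_mul_eq_diagonal Unitary.isUnit_coe hP hU h

end SignCounts

section BorderedBasis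

variable {n : ℕ}

def borderedBasis (α : Fin n → ℝ) (v : Fin n → Fin n → ℝ) :
    Matrix (Fin (n + 1)) (Fin (n + 1)) ℝ :=
  (of (Fin.cons (Pi.single 0 1) fun i => Fin.cons (α i) (v i)))ᵀ

theorem isUnit_borderedBasis (α : Fin n → ℝ) {v : Fin n → Fin n → ℝ}
    (hv : ∀ i j, v i ⬝ᵥ v j = if i = j then 1 else 0) : IsUnit (borderedBasis α v) := by
  have hV : of v * (of v)ᵀ = 1 := by
    ext i j
    simpa [mul_apply, dotProduct, one_apply] using hv i j
  rw [isUnit_iff_isUnit_det, borderedBasis, det_transpose, det_succ_row_zero, Fin.sum_univ_succ]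
  simpa [Fin.sum_univ_succ, Pi.single_apply, submatrix] using isUnit_det_of_left_inverse hV

theorem transpose_mul_mul_borderedBasis {M : Matrix (Fin (n + 1)) (Fin (n + 1)) ℝ}
    (hM : M.IsSymm) {α lam : Fin n → ℝ} {v : Fin n → Fin n → ℝ}
    (hv : ∀ i j, v i ⬝ᵥ v j = if i = j then 1 else 0)
    (heig : ∀ i, M *ᵥ Fin.cons (α i) (v i) = lam i • Fin.cons 0 (v i)) :
    (borderedBasis α v)ᵀ * M * borderedBasis α v = diagonal (Fin.cons (M 0 0) lam) := by
  have hcorner : ∀ i, Pi.single 0 1 ⬝ᵥ M *ᵥ Fin.cons (α i) (v i) = 0 := fun i => by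
    simp [heig]
  have hcons : ∀ i j, Fin.cons (α i) (v i) ⬝ᵥ Fin.cons 0 (v j) = v i ⬝ᵥ v j := fun i j =>
    (cons_dotProduct_cons (α i) (v i) 0 (v j)).trans (by rw [mul_zero, zero_add])
  have hsym : ∀ x y, x ⬝ᵥ M *ᵥ y = y ⬝ᵥ M *ᵥ x := fun x y => by
    rw [dotProduct_mulVec, ← mulVec_transpose, hM.eq, dotProduct_comm]
  have hrow : ∀ k, (borderedBasis α v)ᵀ k
      = (Fin.cons (Pi.single 0 1) fun i => Fin.cons (α i) (v i) : Fin (n + 1) → _) k :=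
    fun _ => rfl
  ext k l
  rw [transpose_mul_mul_apply, hrow, hrow]
  induction k using Fin.cases with
  | zero => induction l using Fin.cases with
    | zero => simp [mulVec, dotProduct, Pi.single_apply]
    | succ j =>
      rw [Fin.cons_zero, Fin.cons_succ, hcorner, diagonal_apply_ne _ (Fin.succ_ne_zero j).symm]
  | succ i => induction l using Fin.cases with
    | zero =>
      rw [Fin.cons_succ, Fin.cons_zero, hsym, hcorner, diagonal_apply_ne _ (Fin.succ_ne_zero i)]
    | succ j =>
      rw [Fin.cons_succ, Fin.cons_succ, heig, dotProduct_smul, hcons, hv, diagonal_apply]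
      simp only [Fin.succ_inj, Fin.cons_succ]
      split_ifs with hij <;> simp [hij]

end BorderedBasis

theorem statement16_general {n : ℕ} (M : Matrix (Fin (n+1)) (Fin (n+1)) ℝ)
    (hM : M.IsSymm)
    (vstar : Fin n → (Fin n → ℝ))
    (horth : ∀ i j, (∑ t, vstar i t * vstar j t) = if i = j then (1:ℝ) else 0)
    (lam : Fin n → ℝ) (α : Fin n → ℝ)
    (heig : ∀ i, M.mulVec (Fin.cons (α i) (vstar i) : Fin (n+1) → ℝ)
        = lam i • (Fin.cons 0 (vstar i) : Fin (n+1) → ℝ)) :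
    inertia M = sgn3 (M 0 0) + ∑ i, sgn3 (lam i) ∧
    (inertia M).1
      = (Finset.univ.filter fun i => 0 < lam i).card + (if 0 < M 0 0 then 1 else 0) ∧
    (inertia M).2.1
      = (Finset.univ.filter fun i => lam i = 0).card + (if M 0 0 = 0 then 1 else 0) ∧
    (inertia M).2.2
      = (Finset.univ.filter fun i => lam i < 0).card + (if M 0 0 < 0 then 1 else 0) := by
  have hinertia : inertia M = sgn3 (M 0 0) + ∑ i, sgn3 (lam i) := by
    rw [inertia_eq_signCounts_of_transpose_mul_mul_eq_diagonal hM (isUnit_borderedBasis α horth)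
      (transpose_mul_mul_borderedBasis hM horth heig), ← sum_sgn3, Fin.sum_univ_succ]
    simp only [Fin.cons_zero, Fin.cons_succ]
  rw [hinertia, sum_sgn3, signCounts, sgn3_eq_ite]
  exact ⟨rfl, add_comm _ _, add_comm _ _, add_comm _ _⟩

/-- if `M` is a real symmetric `N×N` matrix (`N = n+1 ≥ 2`), `v*₁,…,v*ₙ` an
orthonormal basis of `ℝⁿ`, and `M·(αᵢ, v*ᵢ) = λᵢ·(0, v*ᵢ)` for all `i`, then
`𝐧(M) = sgn(M₁₁) + Σᵢ sgn(λᵢ)`, with the componentwise consequences for `n₊, n₀, n₋`. -/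
theorem statement16 {n : ℕ} (hn : 1 ≤ n) (M : Matrix (Fin (n+1)) (Fin (n+1)) ℝ)
    (hM : M.IsSymm)
    (vstar : Fin n → (Fin n → ℝ))
    (horth : ∀ i j, (∑ t, vstar i t * vstar j t) = if i = j then (1:ℝ) else 0)
    (lam : Fin n → ℝ) (α : Fin n → ℝ)
    (heig : ∀ i, M.mulVec (Fin.cons (α i) (vstar i) : Fin (n+1) → ℝ)
        = lam i • (Fin.cons 0 (vstar i) : Fin (n+1) → ℝ)) :
    inertia M = sgn3 (M 0 0) + ∑ i, sgn3 (lam i) ∧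
    (inertia M).1
      = (Finset.univ.filter fun i => 0 < lam i).card + (if 0 < M 0 0 then 1 else 0) ∧
    (inertia M).2.1
      = (Finset.univ.filter fun i => lam i = 0).card + (if M 0 0 = 0 then 1 else 0) ∧
    (inertia M).2.2
      = (Finset.univ.filter fun i => lam i < 0).card + (if M 0 0 < 0 then 1 else 0) :=
  statement16_general M hM vstar horth lam α heig
end

section
/- Let G = (V,E) be a graph with at least one edge, with interaction laws f_ij = f_ji ∈ 𝓕, and let p ∈ P be a configuration with all agents on the a-axis at coordinates a = (a_1,…,a_N). Then in the coordinates (a_1,…,a_N, b_1,…,b_N), the Hessian of Φ at p equals the block-diagonal matrix −diag(d̃F_p, F_p). If moreover p is an equilibrium, then the three vectors t_a = (e, 0), t_b = (0, e) and r_p = (0, a), where e = (1,…,1), lie in the kernel of this Hessian, so it has at least three zero eigenvalues; and the critical orbit O_p is nondegenerate if and only if the kernel of d̃F_p is spanned by e and the kernel of F_p is spanned by e and a. -/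
open Set Filter Topology MeasureTheory Matrix Function

attribute [local instance] Classical.propDecidable

/-!
Each edge contributes `ψ(|xᵢ - xⱼ|)` with `ψ'(d) = d f(d)`, so `∂Φ/∂xₖ = Σⱼ fₖⱼ(dₖⱼ)(xₖ - xⱼ)`.
Differentiating once more at a configuration on the `a`-axis, where `xₖ - xⱼ = (aₖ - aⱼ, 0)`,
the edge term has Hessian `diag(f̃'(d), f(d))`: the radial direction sees `f̃'` and the
tangential one sees `f`. Summing over the edges gives the weighted Laplacians `-d̃F_p` on the
`a`-block and `-F_p` on the `b`-block. Both annihilate `e`, and at an equilibrium the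
`a`-components of the force balance say `F_p a = 0`. Hence
`n₀ = dim ker d̃F_p + dim ker F_p ≥ 1 + 2` (`e` and `a` are independent because some edge
joins distinct `aᵢ ≠ aⱼ`), with equality iff the kernels are `span{e}` and `span{e, a}`.
-/

section Derivatives

open ContinuousLinearMap

theorem sq_add_sq_pos_of_ne_zero {u : ℝ × ℝ} (hu : u ≠ 0) : 0 < u.1 ^ 2 + u.2 ^ 2 := by
  have : u.1 ≠ 0 ∨ u.2 ≠ 0 := by
    contrapose! hu
    exact Prod.ext hu.1 hu.2
  rcases this with h | h <;> positivity

theorem hasFDerivAt_sqrt_sq_add_sq {u : ℝ × ℝ} (hu : u ≠ 0) :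
    HasFDerivAt (fun v : ℝ × ℝ => √(v.1 ^ 2 + v.2 ^ 2))
      ((√(u.1 ^ 2 + u.2 ^ 2))⁻¹ • (u.1 • fst ℝ ℝ ℝ + u.2 • snd ℝ ℝ ℝ)) u := by
  have hsq : HasFDerivAt (fun v : ℝ × ℝ => v.1 ^ 2 + v.2 ^ 2)
      ((2 * u.1) • fst ℝ ℝ ℝ + (2 * u.2) • snd ℝ ℝ ℝ) u :=
    (((hasFDerivAt_fst (p := u)).pow 2).add ((hasFDerivAt_snd (p := u)).pow 2)).congr_fderiv
      (by ext <;> simp)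
  refine ((Real.hasDerivAt_sqrt (sq_add_sq_pos_of_ne_zero hu).ne').comp_hasFDerivAt u
    hsq).congr_fderiv ?_
  ext <;> simp <;> field_simp

theorem hasFDerivAt_integral_sqrt {f : ℝ → ℝ} (hf : ContinuousOn f (Ioi 0)) {u : ℝ × ℝ}
    (hu : u ≠ 0) :
    HasFDerivAt (fun v : ℝ × ℝ => ∫ x in (1 : ℝ)..√(v.1 ^ 2 + v.2 ^ 2), x * f x)
      (f √(u.1 ^ 2 + u.2 ^ 2) • (u.1 • fst ℝ ℝ ℝ + u.2 • snd ℝ ℝ ℝ)) u := by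
  set r := √(u.1 ^ 2 + u.2 ^ 2)
  have hr : 0 < r := Real.sqrt_pos.mpr (sq_add_sq_pos_of_ne_zero hu)
  have hcont : ContinuousOn (fun x => x * f x) (Ioi 0) := continuousOn_id.mul hf
  have hsub : uIcc 1 r ⊆ Ioi 0 := fun x hx => lt_of_lt_of_le (lt_min one_pos hr) hx.1
  have hψ : HasDerivAt (fun t => ∫ x in (1 : ℝ)..t, x * f x) (r * f r) r :=
    intervalIntegral.integral_hasDerivAt_right ((hcont.mono hsub).intervalIntegrable)
      (hcont.stronglyMeasurableAtFilter isOpen_Ioi r hr)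
      (hcont.continuousAt (Ioi_mem_nhds hr))
  refine (hψ.comp_hasFDerivAt u (hasFDerivAt_sqrt_sq_add_sq hu)).congr_fderiv ?_
  rw [smul_smul, mul_comm r, mul_assoc, mul_inv_cancel₀ hr.ne', mul_one]

theorem hasFDerivAt_mul_dot_at_axis {f : ℝ → ℝ} {t : ℝ} (ht : t ≠ 0)
    (hf : DifferentiableAt ℝ f |t|) (w : ℝ × ℝ) :
    HasFDerivAt (fun u : ℝ × ℝ => f √(u.1 ^ 2 + u.2 ^ 2) * (u.1 * w.1 + u.2 * w.2))
      ((deriv (tildeFn f) |t| * w.1) • fst ℝ ℝ ℝ + (f |t| * w.2) • snd ℝ ℝ ℝ) (t, 0) := by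
  have habs : √(t ^ 2 + 0 ^ 2) = |t| := by simp [Real.sqrt_sq_eq_abs]
  have hfr : HasDerivAt f (deriv f |t|) √((t, (0 : ℝ)).1 ^ 2 + (t, (0 : ℝ)).2 ^ 2) := by
    simpa only [habs] using hf.hasDerivAt
  have hlin : HasFDerivAt (fun u : ℝ × ℝ => u.1 * w.1 + u.2 * w.2)
      (w.1 • fst ℝ ℝ ℝ + w.2 • snd ℝ ℝ ℝ) (t, 0) :=
    ((hasFDerivAt_fst.mul_const w.1).add (hasFDerivAt_snd.mul_const w.2)).congr_fderiv
      (by ext <;> simp)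
  have htilde : deriv (tildeFn f) |t| = f |t| + |t| * deriv f |t| := by
    have h := (hasDerivAt_id' |t|).mul hf.hasDerivAt
    rw [one_mul] at h
    exact h.deriv
  have hu : ((t, 0) : ℝ × ℝ) ≠ 0 := by simpa using ht
  refine ((hfr.comp_hasFDerivAt (t, (0 : ℝ)) (hasFDerivAt_sqrt_sq_add_sq hu)).mul
    hlin).congr_fderiv ?_
  have habs_mul : t * (|t|⁻¹ * t) = |t| := by
    field_simp
    exact (sq_abs t).symm
  ext <;> simp [Real.sqrt_sq_eq_abs, htilde]
  linear_combination w.1 * deriv f |t| * habs_mul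

theorem half_sum_sum_mul_sub_of_antisymm {ι : Type*} [Fintype ι] (c : ι → ι → ℝ)
    (hc : ∀ i j, c j i = -c i j) (x : ι → ℝ) :
    (1 / 2 : ℝ) * ∑ i, ∑ j, c i j * (x i - x j) = ∑ i, (∑ j, c i j) * x i := by
  have hswap : ∑ i, ∑ j, c i j * x j = -∑ i, (∑ j, c i j) * x i := by
    rw [Finset.sum_comm]
    simp only [Finset.sum_mul, ← Finset.sum_neg_distrib]
    exact Finset.sum_congr rfl fun j _ => Finset.sum_congr rfl fun i _ => by rw [hc]; ring
  simp only [mul_sub, Finset.sum_sub_distrib, hswap, Finset.sum_mul]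
  ring

theorem dist2_comm (x y : ℝ × ℝ) : dist2 x y = dist2 y x := by
  simp only [dist2]
  ring_nf

variable {N : ℕ}

def edgeDiff (i j : Fin N) : (Fin N → ℝ × ℝ) →L[ℝ] ℝ × ℝ :=
  proj (R := ℝ) (φ := fun _ => ℝ × ℝ) i - proj j

@[simp] theorem edgeDiff_apply (i j : Fin N) (q : Fin N → ℝ × ℝ) : edgeDiff i j q = q i - q j :=
  rfl

variable (G : SimpleGraph (Fin N)) (f : Fin N → Fin N → ℝ → ℝ)

theorem eventually_inConfigSpace {p : Fin N → ℝ × ℝ} (hp : InConfigSpace G p) :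
    ∀ᶠ q in 𝓝 p, InConfigSpace G q := by
  simp only [InConfigSpace, eventually_all]
  intro i j h
  exact (isOpen_ne_fun (continuous_apply i) (continuous_apply j)).mem_nhds (hp i j h)

theorem inConfigSpace_lineConfig {a : Fin N → ℝ} (hP : ∀ i j, G.Adj i j → a i ≠ a j) :
    InConfigSpace G (lineConfig a) :=
  fun i j h heq => hP i j h (congrArg Prod.fst heq)

theorem hasFDerivAt_potential (hf : ∀ i j, G.Adj i j → ContinuousOn (f i j) (Ioi 0))
    {q : Fin N → ℝ × ℝ} (hq : InConfigSpace G q) :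
    HasFDerivAt (potential G f)
      ((1 / 2 : ℝ) • ∑ i, ∑ j, if G.Adj i j then
        (f i j (dist2 (q i) (q j)) • ((q i - q j).1 • fst ℝ ℝ ℝ + (q i - q j).2 • snd ℝ ℝ ℝ)).comp
          (edgeDiff i j) else 0) q := by
  refine (HasFDerivAt.fun_sum fun i _ => HasFDerivAt.fun_sum fun j _ => ?_).const_mul (1 / 2)
  split_ifs with hij
  · exact (hasFDerivAt_integral_sqrt (hf i j hij) (sub_ne_zero.mpr (hq i j hij))).comp q
      (edgeDiff i j).hasFDerivAt
  · exact hasFDerivAt_const 0 q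

theorem fderiv_potential_single (hsym : ∀ i j, f i j = f j i)
    (hf : ∀ i j, G.Adj i j → ContinuousOn (f i j) (Ioi 0))
    {q : Fin N → ℝ × ℝ} (hq : InConfigSpace G q) (k : Fin N) (w : ℝ × ℝ) :
    fderiv ℝ (potential G f) q (Pi.single k w) = ∑ j, if G.Adj k j then
      f k j (dist2 (q k) (q j)) * ((q k - q j).1 * w.1 + (q k - q j).2 * w.2) else 0 := by
  set c : Fin N → Fin N → ℝ := fun i j => if G.Adj i j then
    f i j (dist2 (q i) (q j)) * ((q i - q j).1 * w.1 + (q i - q j).2 * w.2) else 0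
  have hc : ∀ i j, c j i = -c i j := fun i j => by
    simp only [c, G.adj_comm j i, hsym j i, dist2_comm (q j), Prod.fst_sub, Prod.snd_sub]
    split_ifs
    · ring
    · simp
  have hsingle : ∀ i, (Pi.single k w : Fin N → ℝ × ℝ) i = (Pi.single k 1 : Fin N → ℝ) i • w :=
    fun i => by by_cases hi : i = k <;> simp [hi]
  rw [(hasFDerivAt_potential G f hf hq).fderiv]
  convert half_sum_sum_mul_sub_of_antisymm c hc (Pi.single k 1) using 1
  · simp only [_root_.smul_apply, _root_.sum_apply, smul_eq_mul, c]
    congr 1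
    refine Finset.sum_congr rfl fun i _ => Finset.sum_congr rfl fun j _ => ?_
    split_ifs
    · simp only [Prod.fst_sub, Prod.snd_sub, smul_add, add_comp, smul_comp, _root_.add_apply,
        _root_.smul_apply, ContinuousLinearMap.comp_apply, edgeDiff_apply, hsingle, coe_fst',
        Prod.smul_fst, smul_eq_mul, coe_snd', Prod.smul_snd]
      ring
    · simp
  · simp [Pi.single_apply, c]

theorem hasFDerivAt_gradient_lineConfig (hf : ∀ i j, G.Adj i j → DifferentiableOn ℝ (f i j) (Ioi 0))
    {a : Fin N → ℝ} (hP : ∀ i j, G.Adj i j → a i ≠ a j) (k : Fin N) (w : ℝ × ℝ) :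
    HasFDerivAt (fun q : Fin N → ℝ × ℝ => ∑ j, if G.Adj k j then
        f k j (dist2 (q k) (q j)) * ((q k - q j).1 * w.1 + (q k - q j).2 * w.2) else 0)
      (∑ j, if G.Adj k j then
        ((deriv (tildeFn (f k j)) |a k - a j| * w.1) • fst ℝ ℝ ℝ
          + (f k j |a k - a j| * w.2) • snd ℝ ℝ ℝ).comp (edgeDiff k j) else 0)
      (lineConfig a) := by
  refine HasFDerivAt.fun_sum fun j _ => ?_
  split_ifs with hkj
  · have ht : a k - a j ≠ 0 := sub_ne_zero.mpr (hP k j hkj)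
    have h := hasFDerivAt_mul_dot_at_axis ht
      ((hf k j hkj).differentiableAt (Ioi_mem_nhds (abs_pos.mpr ht))) w
    rw [show ((a k - a j, 0) : ℝ × ℝ) = edgeDiff k j (lineConfig a) by simp [lineConfig]] at h
    exact h.comp _ (edgeDiff k j).hasFDerivAt
  · exact hasFDerivAt_const 0 _

end Derivatives

section LineMatrices

variable {N : ℕ} (G : SimpleGraph (Fin N)) (φ : Fin N → Fin N → ℝ → ℝ) (a : Fin N → ℝ)

theorem FMat_apply (i j : Fin N) :
    FMat G φ a i j = (if G.Adj i j then φ i j |a i - a j| else 0)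
      - if i = j then ∑ k, (if G.Adj i k then φ i k |a i - a k| else 0) else 0 := by
  by_cases h : i = j
  · subst h; simp [FMat]
  · simp [FMat, h]

theorem FMat_mulVec (x : Fin N → ℝ) (i : Fin N) :
    (FMat G φ a *ᵥ x) i = ∑ j, if G.Adj i j then φ i j |a i - a j| * (x j - x i) else 0 := by
  simp only [mulVec, dotProduct, FMat_apply, sub_mul, Finset.sum_sub_distrib, ite_mul, zero_mul,
    Finset.sum_ite_eq, Finset.mem_univ, if_true, Finset.sum_mul, mul_sub]
  rw [← Finset.sum_sub_distrib]
  exact Finset.sum_congr rfl fun j _ => by split_ifs <;> ring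

theorem FMat_comm (hφ : ∀ i j, φ i j = φ j i) (i j : Fin N) : FMat G φ a j i = FMat G φ a i j := by
  by_cases h : i = j
  · rw [h]
  · simp only [FMat_apply, G.adj_comm j i, hφ j i, abs_sub_comm (a j), h, Ne.symm h, if_false]

theorem FMat_apply_eq_sum (i j : Fin N) :
    FMat G φ a i j = ∑ k, if G.Adj i k then
      φ i k |a i - a k| * ((Pi.single j 1 : Fin N → ℝ) k - (Pi.single j 1 : Fin N → ℝ) i)
      else 0 := by
  rw [← FMat_mulVec, mulVec_single_one, col_apply]

theorem FMat_mulVec_const (c : ℝ) : FMat G φ a *ᵥ (fun _ => c) = 0 := by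
  ext i
  simp [FMat_mulVec]

theorem FMat_isHermitian (hφ : ∀ i j, φ i j = φ j i) : (FMat G φ a).IsHermitian :=
  Matrix.IsHermitian.ext fun i j => by simpa using FMat_comm G φ a hφ i j

theorem dist2_lineConfig (i j : Fin N) :
    dist2 (lineConfig a i) (lineConfig a j) = |a i - a j| := by
  simp [dist2, lineConfig, Real.sqrt_sq_eq_abs]

end LineMatrices

section Hessian

variable {N : ℕ} (G : SimpleGraph (Fin N)) (f : Fin N → Fin N → ℝ → ℝ)

theorem FMat_mulVec_self_of_isEquilibrium {a : Fin N → ℝ}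
    (heq : IsEquilibrium G f (lineConfig a)) : FMat G f a *ᵥ a = 0 := by
  ext i
  have hi := congrArg Prod.fst (heq i)
  simp only [dist2_lineConfig] at hi
  simpa [FMat_mulVec, lineConfig, Prod.fst_sum, apply_ite Prod.fst] using hi

theorem dFMat_isHermitian (hsym : ∀ i j, f i j = f j i) (a : Fin N → ℝ) :
    (dFMat G f a).IsHermitian :=
  FMat_isHermitian G _ a fun i j => by rw [hsym]

theorem fderiv_fderiv_potential_single_lineConfig (hsym : ∀ i j, f i j = f j i)
    (hf : ∀ i j, G.Adj i j → DifferentiableOn ℝ (f i j) (Ioi 0))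
    {a : Fin N → ℝ} (hP : ∀ i j, G.Adj i j → a i ≠ a j) (i k : Fin N) (w' w : ℝ × ℝ) :
    fderiv ℝ (fun q => fderiv ℝ (potential G f) q (Pi.single k w)) (lineConfig a)
        (Pi.single i w')
      = -(w'.1 * w.1 * dFMat G f a i k + w'.2 * w.2 * FMat G f a i k) := by
  have hgrad : (fun q => fderiv ℝ (potential G f) q (Pi.single k w)) =ᶠ[𝓝 (lineConfig a)]
      fun q => ∑ j, if G.Adj k j then
        f k j (dist2 (q k) (q j)) * ((q k - q j).1 * w.1 + (q k - q j).2 * w.2) else 0 :=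
    (eventually_inConfigSpace G (inConfigSpace_lineConfig G hP)).mono fun q hq =>
      fderiv_potential_single G f hsym (fun i j h => (hf i j h).continuousOn) hq k w
  have hdsym : ∀ i j, (fun d => deriv (tildeFn (f i j)) d) = fun d => deriv (tildeFn (f j i)) d :=
    fun i j => by rw [hsym]
  rw [hgrad.fderiv_eq, (hasFDerivAt_gradient_lineConfig G f hf hP k w).fderiv, dFMat,
    ← FMat_comm G _ a hdsym, ← FMat_comm G f a hsym, FMat_apply_eq_sum, FMat_apply_eq_sum]
  simp only [_root_.sum_apply, Finset.mul_sum, ← Finset.sum_add_distrib, ← Finset.sum_neg_distrib]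
  refine Finset.sum_congr rfl fun j _ => ?_
  split_ifs
  · simp only [ContinuousLinearMap.add_comp, ContinuousLinearMap.smul_comp, _root_.add_apply,
      _root_.smul_apply, ContinuousLinearMap.comp_apply, edgeDiff_apply, Pi.single_apply,
      ContinuousLinearMap.coe_fst', Prod.fst_sub, smul_eq_mul, ContinuousLinearMap.coe_snd',
      Prod.snd_sub]
    split_ifs <;> simp <;> ring
  · simp

theorem hessian_potential_lineConfig (hsym : ∀ i j, f i j = f j i)
    (hf : ∀ i j, G.Adj i j → DifferentiableOn ℝ (f i j) (Ioi 0))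
    {a : Fin N → ℝ} (hP : ∀ i j, G.Adj i j → a i ≠ a j) :
    hessian (potential G f) (lineConfig a) = -fromBlocks (dFMat G f a) 0 0 (FMat G f a) := by
  ext (i | i) (k | k) <;>
    simp [hessian, basisVec, fderiv_fderiv_potential_single_lineConfig G f hsym hf hP]

end Hessian

section Kernels

theorem n0_eq_finrank_ker {m : Type*} [Fintype m] [DecidableEq m] {M : Matrix m m ℝ}
    (hM : M.IsHermitian) : n0 M = Module.finrank ℝ (LinearMap.ker M.mulVecLin) := by
  have hrank : M.rank + Module.finrank ℝ (LinearMap.ker M.mulVecLin) = Fintype.card m := by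
    rw [Matrix.rank]
    simpa using LinearMap.finrank_range_add_finrank_ker M.mulVecLin
  rw [hM.rank_eq_card_non_zero_eigs, Fintype.card_subtype] at hrank
  simp only [ne_eq] at hrank
  have hsplit := Finset.card_filter_add_card_filter_not (s := Finset.univ)
    (fun i => hM.eigenvalues i = 0)
  rw [Finset.card_univ] at hsplit
  rw [n0, inertia, dif_pos hM]
  dsimp only
  omega

theorem Submodule.finrank_prod {R M M' : Type*} [DivisionRing R] [AddCommGroup M] [Module R M]
    [AddCommGroup M'] [Module R M'] (p : Submodule R M) (q : Submodule R M')
    [Module.Finite R p] [Module.Finite R q] :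
    Module.finrank R (p.prod q) = Module.finrank R p + Module.finrank R q :=
  let e : p.prod q ≃ₗ[R] p × q :=
    { toFun := fun x => (⟨x.1.1, x.2.1⟩, ⟨x.1.2, x.2.2⟩)
      invFun := fun y => ⟨(y.1, y.2), y.1.2, y.2.2⟩
      map_add' := fun _ _ => rfl
      map_smul' := fun _ _ => rfl }
  e.finrank_eq.trans Module.finrank_prod

theorem finrank_ker_fromBlocks_zero {m n : Type*} [Fintype m] [Fintype n] (A : Matrix m m ℝ)
    (D : Matrix n n ℝ) :
    Module.finrank ℝ (LinearMap.ker (fromBlocks A 0 0 D).mulVecLin)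
      = Module.finrank ℝ (LinearMap.ker A.mulVecLin)
        + Module.finrank ℝ (LinearMap.ker D.mulVecLin) := by
  let e := LinearEquiv.sumArrowLequivProdArrow m n ℝ ℝ
  have hker : LinearMap.ker (fromBlocks A 0 0 D).mulVecLin
      = ((LinearMap.ker A.mulVecLin).prod (LinearMap.ker D.mulVecLin)).comap e.toLinearMap := by
    ext x
    simp only [LinearMap.mem_ker, mulVecLin_apply, fromBlocks_mulVec, zero_mulVec, add_zero,
      zero_add, funext_iff, Pi.zero_apply, Sum.forall, Sum.elim_inl, Sum.elim_inr,
      Submodule.mem_comap, LinearEquiv.coe_coe, Submodule.mem_prod, e]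
    rfl
  rw [hker, Submodule.comap_equiv_eq_map_symm, LinearEquiv.finrank_map_eq, Submodule.finrank_prod]

theorem ker_mulVecLin_neg {m n : Type*} [Fintype n] (M : Matrix m n ℝ) :
    LinearMap.ker (-M).mulVecLin = LinearMap.ker M.mulVecLin := by
  ext
  simp

theorem n0_neg_fromBlocks_zero {m n : Type*} [Fintype m] [DecidableEq m] [Fintype n]
    [DecidableEq n] {A : Matrix m m ℝ} {D : Matrix n n ℝ} (hA : A.IsHermitian)
    (hD : D.IsHermitian) :
    n0 (-fromBlocks A 0 0 D)
      = Module.finrank ℝ (LinearMap.ker A.mulVecLin)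
        + Module.finrank ℝ (LinearMap.ker D.mulVecLin) := by
  rw [n0_eq_finrank_ker (hA.fromBlocks (by simp) hD).neg, ker_mulVecLin_neg,
    finrank_ker_fromBlocks_zero]

theorem finrank_eq_finrank_iff_le_of_le {K V : Type*} [DivisionRing K] [AddCommGroup V]
    [Module K V] {S T : Submodule K V} [FiniteDimensional K T] (hST : S ≤ T) :
    Module.finrank K T = Module.finrank K S ↔ T ≤ S :=
  ⟨fun h => (Submodule.eq_of_le_of_finrank_eq hST h.symm).ge, fun h => by rw [le_antisymm h hST]⟩

variable {ι : Type*}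

theorem mem_span_const_one {x : ι → ℝ} :
    x ∈ Submodule.span ℝ {fun _ => 1} ↔ ∃ c : ℝ, x = fun _ => c := by
  simp [Submodule.mem_span_singleton, eq_comm, funext_iff]

theorem mem_span_const_one_pair {a x : ι → ℝ} :
    x ∈ Submodule.span ℝ {fun _ => 1, a} ↔ ∃ c e : ℝ, x = fun i => c + e * a i := by
  simp [Submodule.mem_span_pair, eq_comm, funext_iff]

theorem finrank_span_const_one [Nonempty ι] :
    Module.finrank ℝ (Submodule.span ℝ {fun _ : ι => (1 : ℝ)}) = 1 :=
  finrank_span_singleton fun h => one_ne_zero (congrFun h (Classical.arbitrary ι))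

theorem finrank_span_const_one_pair {a : ι → ℝ} {i j : ι} (hij : a i ≠ a j) :
    Module.finrank ℝ (Submodule.span ℝ {fun _ => 1, a}) = 2 := by
  have hli : LinearIndependent ℝ ![fun _ : ι => (1 : ℝ), a] := by
    rw [LinearIndependent.pair_iff]
    intro s t hst
    have hi := congrFun hst i
    have hj := congrFun hst j
    simp only [Pi.add_apply, Pi.smul_apply, smul_eq_mul, mul_one, Pi.zero_apply] at hi hj
    have ht : t = 0 :=
      (mul_eq_zero.mp (by linear_combination hi - hj : t * (a i - a j) = 0)).resolve_right
        (sub_ne_zero.mpr hij)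
    exact ⟨by simpa [ht] using hi, ht⟩
  rw [← Matrix.range_cons_cons_empty _ _ ![]]
  simpa using finrank_span_eq_card hli

variable [Fintype ι] {M : Matrix ι ι ℝ}

theorem span_const_one_le_ker (h1 : M *ᵥ (fun _ => 1) = 0) :
    Submodule.span ℝ {fun _ => 1} ≤ LinearMap.ker M.mulVecLin := by
  simpa [Submodule.span_le] using h1

theorem span_const_one_pair_le_ker {a : ι → ℝ} (h1 : M *ᵥ (fun _ => 1) = 0) (ha : M *ᵥ a = 0) :
    Submodule.span ℝ {fun _ => 1, a} ≤ LinearMap.ker M.mulVecLin := by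
  simpa [Submodule.span_le, Set.insert_subset_iff, ha] using h1

theorem one_le_finrank_ker [Nonempty ι] (h1 : M *ᵥ (fun _ => 1) = 0) :
    1 ≤ Module.finrank ℝ (LinearMap.ker M.mulVecLin) :=
  finrank_span_const_one (ι := ι) ▸ Submodule.finrank_mono (span_const_one_le_ker h1)

theorem finrank_ker_eq_one_iff [Nonempty ι] (h1 : M *ᵥ (fun _ => 1) = 0) :
    Module.finrank ℝ (LinearMap.ker M.mulVecLin) = 1
      ↔ ∀ x, M *ᵥ x = 0 → ∃ c : ℝ, x = fun _ => c := by
  rw [← finrank_span_const_one (ι := ι),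
    finrank_eq_finrank_iff_le_of_le (span_const_one_le_ker h1)]
  simp [SetLike.le_def, mem_span_const_one]

theorem two_le_finrank_ker {a : ι → ℝ} {i j : ι} (hij : a i ≠ a j) (h1 : M *ᵥ (fun _ => 1) = 0)
    (ha : M *ᵥ a = 0) : 2 ≤ Module.finrank ℝ (LinearMap.ker M.mulVecLin) :=
  finrank_span_const_one_pair hij ▸ Submodule.finrank_mono (span_const_one_pair_le_ker h1 ha)

theorem finrank_ker_eq_two_iff {a : ι → ℝ} {i j : ι} (hij : a i ≠ a j)
    (h1 : M *ᵥ (fun _ => 1) = 0) (ha : M *ᵥ a = 0) :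
    Module.finrank ℝ (LinearMap.ker M.mulVecLin) = 2
      ↔ ∀ x, M *ᵥ x = 0 → ∃ c e : ℝ, x = fun i => c + e * a i := by
  rw [← finrank_span_const_one_pair hij,
    finrank_eq_finrank_iff_le_of_le (span_const_one_pair_le_ker h1 ha)]
  simp [SetLike.le_def, mem_span_const_one_pair]

end Kernels

/-- at a line configuration `p` on the `a`-axis, the Hessian of `Φ` in the
coordinates `(a₁,…,a_N,b₁,…,b_N)` equals `−diag(d̃F_p, F_p)`; if `p` is an equilibrium then
`t_a = (e,0)`, `t_b = (0,e)`, `r_p = (0,a)` lie in its kernel, so it has at least three zero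
eigenvalues, and the critical orbit is nondegenerate (exactly three zero eigenvalues) iff
`ker d̃F_p = span{e}` and `ker F_p = span{e, a}`. -/
theorem statement17 {N : ℕ} (G : SimpleGraph (Fin N)) (hedge : ∃ i j, G.Adj i j)
    (f : Fin N → Fin N → ℝ → ℝ)
    (hsym : ∀ i j, f i j = f j i)
    (hF : ∀ i j, G.Adj i j → MemF (f i j))
    (a : Fin N → ℝ)
    (hP : ∀ i j, G.Adj i j → a i ≠ a j) :
    hessian (potential G f) (lineConfig a)
        = -(Matrix.fromBlocks (dFMat G f a) 0 0 (FMat G f a)) ∧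
    (IsEquilibrium G f (lineConfig a) →
      (hessian (potential G f) (lineConfig a)).mulVec
          (Sum.elim (fun _ => (1:ℝ)) (fun _ => 0)) = 0 ∧
      (hessian (potential G f) (lineConfig a)).mulVec
          (Sum.elim (fun _ => (0:ℝ)) (fun _ => 1)) = 0 ∧
      (hessian (potential G f) (lineConfig a)).mulVec
          (Sum.elim (fun _ => (0:ℝ)) (fun i => a i)) = 0 ∧
      3 ≤ n0 (hessian (potential G f) (lineConfig a)) ∧
      (n0 (hessian (potential G f) (lineConfig a)) = 3 ↔
        ((∀ x : Fin N → ℝ, (dFMat G f a).mulVec x = 0 → ∃ c : ℝ, x = fun _ => c) ∧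
         (∀ x : Fin N → ℝ, (FMat G f a).mulVec x = 0 →
            ∃ c e : ℝ, x = fun i => c + e * a i)))) := by
  have hHess := hessian_potential_lineConfig G f hsym
    (fun i j h => (hF i j h).1.differentiableOn one_ne_zero) hP
  refine ⟨hHess, fun heq => ?_⟩
  obtain ⟨i₀, j₀, h₀⟩ := hedge
  have : Nonempty (Fin N) := ⟨i₀⟩
  have hmulVec : ∀ x y, hessian (potential G f) (lineConfig a) *ᵥ Sum.elim x y
      = -Sum.elim (dFMat G f a *ᵥ x) (FMat G f a *ᵥ y) := fun x y => by
    simp [hHess, neg_mulVec, fromBlocks_mulVec]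
  have hd1 : dFMat G f a *ᵥ (fun _ => 1) = 0 := FMat_mulVec_const G _ a 1
  have hF1 : FMat G f a *ᵥ (fun _ => 1) = 0 := FMat_mulVec_const G f a 1
  have hFa := FMat_mulVec_self_of_isEquilibrium G f heq
  have hn0 := hHess ▸ n0_neg_fromBlocks_zero (dFMat_isHermitian G f hsym a)
    (FMat_isHermitian G f a hsym)
  have hKd := one_le_finrank_ker hd1
  have hKF := two_le_finrank_ker (hP i₀ j₀ h₀) hF1 hFa
  refine ⟨?_, ?_, ?_, by omega, ?_⟩
  iterate 3 simp [hmulVec, dFMat, FMat_mulVec_const, hFa]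
  · rw [← finrank_ker_eq_one_iff hd1, ← finrank_ker_eq_two_iff (hP i₀ j₀ h₀) hF1 hFa]
    omega
end

section
/- 𝓕 is an open subset of C¹(ℝ₊,ℝ) with respect to the Whitney C¹-topology. -/
open Set Filter Topology MeasureTheory Matrix Function

attribute [local instance] Classical.propDecidable

noncomputable section

/-! A small perturbation `g` of `f ∈ 𝓕` stays in `𝓕`: since `g̃′ − f̃′ = (g − f) + d (g′ − f′)`,
a radius `δ(d) ≤ f̃′(d) / (1 + d)` keeps `g̃′` positive; a constant bound on `δ` preserves the
signs of `f̃` at two points bracketing its zero, so `g̃` has a zero by the intermediate value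
theorem; and `δ ≤ 1` gives `g̃ ≤ f̃ + 1` on `(0,1]`, so `∫_d^1 g̃` still diverges to `−∞`. -/

lemma tildeFn_sub_tildeFn (f g : ℝ → ℝ) (d : ℝ) :
    tildeFn g d - tildeFn f d = d * (g d - f d) := by
  simp only [tildeFn]; ring

lemma deriv_tildeFn_s18 {u : ℝ → ℝ} {d : ℝ} (hu : DifferentiableAt ℝ u d) :
    deriv (tildeFn u) d = u d + d * deriv u d := by
  have h : HasDerivAt (tildeFn u) (1 * u d + d * deriv u d) d :=
    (hasDerivAt_id' d).mul hu.hasDerivAt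
  simpa using h.deriv

lemma contDiffOn_tildeFn {u : ℝ → ℝ} {s : Set ℝ} (hu : ContDiffOn ℝ 1 u s) :
    ContDiffOn ℝ 1 (tildeFn u) s :=
  contDiffOn_id.mul hu

lemma deriv_tildeFn_pos_of_close {f g : ℝ → ℝ} {d : ℝ} (hd : 0 < d)
    (hf : DifferentiableAt ℝ f d) (hg : DifferentiableAt ℝ g d)
    (hclose : |g d - f d| + |deriv g d - deriv f d| < deriv (tildeFn f) d / (1 + d)) :
    0 < deriv (tildeFn g) d := by
  rw [lt_div_iff₀ (by linarith), deriv_tildeFn_s18 hf] at hclose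
  rw [deriv_tildeFn_s18 hg]
  have h₀ : -|g d - f d| ≤ g d - f d := neg_abs_le _
  have h₁ : -(d * |deriv g d - deriv f d|) ≤ d * (deriv g d - deriv f d) := by
    rw [← mul_neg]; exact mul_le_mul_of_nonneg_left (neg_abs_le _) hd.le
  nlinarith [mul_nonneg hd.le (abs_nonneg (g d - f d)), abs_nonneg (deriv g d - deriv f d)]

lemma exists_tildeFn_eq_zero_of_close {f g : ℝ → ℝ} {a b : ℝ} (ha : 0 < a) (hab : a ≤ b)
    (hg : ContinuousOn g (Icc a b))
    (hfa : |g a - f a| < -tildeFn f a / a) (hfb : |g b - f b| < tildeFn f b / b) :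
    ∃ d > 0, tildeFn g d = 0 := by
  have hb : 0 < b := ha.trans_le hab
  rw [lt_div_iff₀ ha] at hfa
  rw [lt_div_iff₀ hb] at hfb
  have hga : tildeFn g a < 0 := by
    have := tildeFn_sub_tildeFn f g a
    nlinarith [mul_le_mul_of_nonneg_right (le_abs_self (g a - f a)) ha.le]
  have hgb : 0 < tildeFn g b := by
    have := tildeFn_sub_tildeFn f g b
    nlinarith [mul_le_mul_of_nonneg_right (neg_abs_le (g b - f b)) hb.le]
  obtain ⟨d, hd, hd0⟩ :=
    intermediate_value_Icc hab (continuousOn_id.mul hg) ⟨hga.le, hgb.le⟩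
  exact ⟨d, ha.trans_le hd.1, hd0⟩

lemma tendsto_integral_atBot_of_le_add {u v : ℝ → ℝ} {C : ℝ} (hC : 0 ≤ C)
    (hu : ContinuousOn u (Ioi 0)) (hv : ContinuousOn v (Ioi 0))
    (hle : ∀ x ∈ Ioc (0 : ℝ) 1, v x ≤ u x + C)
    (htend : Tendsto (fun d => ∫ x in d..(1:ℝ), u x) (𝓝[>] 0) atBot) :
    Tendsto (fun d => ∫ x in d..(1:ℝ), v x) (𝓝[>] 0) atBot := by
  refine tendsto_atBot_mono' _ ?_ (tendsto_atBot_add_const_right _ C htend)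
  filter_upwards [Ioo_mem_nhdsGT (zero_lt_one' ℝ)] with d hd
  have hsub : uIcc d 1 ⊆ Ioi 0 := by
    rw [uIcc_of_le hd.2.le]; exact fun x hx => hd.1.trans_le hx.1
  have hui := (hu.mono hsub).intervalIntegrable (μ := volume)
  calc ∫ x in d..1, v x ≤ ∫ x in d..1, (u x + C) :=
        intervalIntegral.integral_mono_on hd.2.le ((hv.mono hsub).intervalIntegrable)
          (hui.add intervalIntegrable_const) fun x hx => hle x ⟨hd.1.trans_le hx.1, hx.2⟩
    _ = (∫ x in d..1, u x) + (1 - d) * C := by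
        rw [intervalIntegral.integral_add hui intervalIntegrable_const,
          intervalIntegral.integral_const, smul_eq_mul]
    _ ≤ (∫ x in d..1, u x) + C := by nlinarith [hd.1]

lemma MemF.exists_tildeFn_neg_pos {f : ℝ → ℝ} (hf : MemF f) :
    ∃ a b, 0 < a ∧ a ≤ b ∧ tildeFn f a < 0 ∧ 0 < tildeFn f b := by
  obtain ⟨hC1, hderiv, ⟨d₀, hd₀, hzero⟩, -⟩ := hf
  have hmono : StrictMonoOn (tildeFn f) (Ioi 0) :=
    strictMonoOn_of_deriv_pos (convex_Ioi 0) (contDiffOn_tildeFn hC1).continuousOn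
      fun x hx => hderiv x (by rwa [interior_Ioi] at hx)
  refine ⟨d₀ / 2, d₀ + 1, by positivity, by linarith, ?_, ?_⟩
  · simpa [hzero] using hmono (half_pos hd₀) hd₀ (half_lt_self hd₀)
  · simpa [hzero] using hmono hd₀ (by positivity : (0:ℝ) < d₀ + 1) (lt_add_one d₀)

def whitneyBall (f : C1Pos) (δ : ℝ → ℝ) : Set C1Pos :=
  {g | ∀ d > (0:ℝ), |g.1 d - f.1 d| + |deriv g.1 d - deriv f.1 d| < δ d}

lemma isOpen_whitneyBall (f : C1Pos) {δ : ℝ → ℝ} (hδ : ContinuousOn δ (Ioi 0))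
    (hδpos : ∀ d > (0:ℝ), 0 < δ d) : IsOpen (whitneyBall f δ) :=
  TopologicalSpace.isOpen_generateFrom_of_mem ⟨f, δ, hδ, hδpos, rfl⟩

lemma mem_whitneyBall_self (f : C1Pos) {δ : ℝ → ℝ} (hδpos : ∀ d > (0:ℝ), 0 < δ d) :
    f ∈ whitneyBall f δ := fun d hd => by simpa using hδpos d hd

lemma C1Pos.differentiableAt (g : C1Pos) {d : ℝ} (hd : 0 < d) : DifferentiableAt ℝ g.1 d :=
  (g.2.differentiableOn one_ne_zero).differentiableAt (Ioi_mem_nhds hd)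

lemma exists_whitneyBall_subset_memF {f : C1Pos} (hf : MemF f.1) :
    ∃ δ : ℝ → ℝ, ContinuousOn δ (Ioi 0) ∧ (∀ d > (0:ℝ), 0 < δ d) ∧
      whitneyBall f δ ⊆ {g | MemF g.1} := by
  obtain ⟨a, b, ha, hab, hfa, hfb⟩ := hf.exists_tildeFn_neg_pos
  set m := min (-tildeFn f.1 a / a) (tildeFn f.1 b / b)
  have hm : 0 < m := lt_min (div_pos (neg_pos.2 hfa) ha) (div_pos hfb (ha.trans_le hab))
  set δ : ℝ → ℝ := fun d => min (deriv (tildeFn f.1) d / (1 + d)) (min 1 m)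
  have hδpos : ∀ d > (0:ℝ), 0 < δ d := fun d hd =>
    lt_min (div_pos (hf.2.1 d hd) (by positivity)) (lt_min one_pos hm)
  have hδcont : ContinuousOn δ (Ioi 0) :=
    (((contDiffOn_tildeFn f.2).continuousOn_deriv_of_isOpen isOpen_Ioi le_rfl).div
      (by fun_prop) fun x (hx : 0 < x) => by positivity).inf continuousOn_const
  refine ⟨δ, hδcont, hδpos, fun g hg => ?_⟩
  have hval : ∀ d > (0:ℝ), |g.1 d - f.1 d| < min 1 m := fun d hd =>
    ((le_add_of_nonneg_right (abs_nonneg _)).trans_lt (hg d hd)).trans_le (min_le_right _ _)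
  refine ⟨g.2, fun d hd => ?_, ?_, ?_⟩
  · exact deriv_tildeFn_pos_of_close hd (f.differentiableAt hd) (g.differentiableAt hd)
      ((hg d hd).trans_le (min_le_left _ _))
  · exact exists_tildeFn_eq_zero_of_close ha hab (g.2.continuousOn.mono
      fun x hx => ha.trans_le hx.1)
      ((hval a ha).trans_le ((min_le_right _ _).trans (min_le_left _ _)))
      ((hval b (ha.trans_le hab)).trans_le ((min_le_right _ _).trans (min_le_right _ _)))
  · refine tendsto_integral_atBot_of_le_add zero_le_one (contDiffOn_tildeFn f.2).continuousOn
      (contDiffOn_tildeFn g.2).continuousOn (fun x hx => ?_) hf.2.2.2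
    have hdiff := tildeFn_sub_tildeFn f.1 g.1 x
    have hgx : g.1 x - f.1 x ≤ 1 :=
      (le_abs_self _).trans ((hval x hx.1).le.trans (min_le_left _ _))
    nlinarith [hx.1, hx.2]

/-- `𝓕` is an open subset of `C¹(ℝ₊,ℝ)` in the Whitney `C¹`-topology. -/
theorem statement18 : IsOpen {f : C1Pos | MemF f.1} := by
  rw [isOpen_iff_forall_mem_open]
  intro f hf
  obtain ⟨δ, hδ, hδpos, hsub⟩ := exists_whitneyBall_subset_memF hf
  exact ⟨_, hsub, isOpen_whitneyBall f hδ hδpos, mem_whitneyBall_self f hδpos⟩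
end
end
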